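/- Let A be a monoid, V an object, and suppose there exist morphisms ψ:V⊗A→A⊗V, σ:V⊗V→A⊗V and ν:K→A⊗V such that ψ satisfies the measuring condition, the quadruple (A,V,ψ,σ) satisfies the twisted and cocycle conditions and ∇_{A⊗V}∘σ=σ, and the following hold: (μ_A⊗V)∘(A⊗σ)∘(ψ⊗V)∘(V⊗ν)=∇_{A⊗V}∘(η_A⊗V), (μ_A⊗V)∘(A⊗σ)∘(ν⊗V)=∇_{A⊗V}∘(η_A⊗V), and (μ_A⊗V)∘(A⊗ψ)∘(ν⊗A)=β_ν where β_ν=(μ_A⊗V)∘(A⊗ν). Then the product μ_{A⊗V}=(μ_A⊗V)∘(μ_A⊗σ)∘(A⊗ψ⊗V) is associative with preunit ν, is normalized with respect to the idempotent ∇_{A⊗V}^ν=μ_{A⊗V}∘(A⊗V⊗ν), and ∇_{A⊗V}=∇_{A⊗V}^ν. -/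

import Mathlib

/-!
For `f : X ⟶ A ⊗ Y` write `t(f) = (μ_A ⊗ Y) ∘ (A ⊗ f)` (`tmap`). Associativity of `μ_A` makes
`t` compose like a Kleisli extension, `t(t(k) ∘ h) = t(k) ∘ t(h)`, and in these terms
`μ_{A⊗V} = t(g)` and `∇_{A⊗V} = t(w)` with `g = t(σ) ∘ (ψ ⊗ V)` (`vmul`) and `w = ψ ∘ (V ⊗ η_A)`
(`psiEta`). The measuring condition lets `V ⊗ t(h)` be pushed through `g`; after that the twisted
and cocycle conditions show that `g` is associative, which is the associativity of `μ_{A⊗V}`.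
Condition (pre1) says `g ∘ (V ⊗ ν) = w`, i.e. `∇^ν = ∇`, and (pre2), (pre3) give the same for
multiplication by `ν` on the left. Finally `∇ ∘ σ = σ` and the twisted condition make `∇` absorbed
by `μ_{A⊗V}` on both sides, which yields the preunit and normalization identities.
-/

open CategoryTheory MonoidalCategory

universe v u

namespace WeakCrossed

variable {C : Type u} [Category.{v} C] [MonoidalCategory C]

/-- The monoid axioms for a triple `(A, η, μ)` in a monoidal category. -/
def IsMon (A : C) (eta : 𝟙_ C ⟶ A) (mu : A ⊗ A ⟶ A) : Prop :=
  (eta ▷ A) ≫ mu = (λ_ A).hom ∧ (A ◁ eta) ≫ mu = (ρ_ A).hom ∧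
    (mu ▷ A) ≫ mu = (α_ A A A).hom ≫ (A ◁ mu) ≫ mu

/-- The morphism `(μ_A ⊗ Y) ∘ (A ⊗ f) : (A ⊗ X) ⊗ Z ⟶ A ⊗ Y` for `f : X ⊗ Z ⟶ A ⊗ Y`. -/
def phi (A : C) {X Z Y : C} (mu : A ⊗ A ⟶ A) (f : X ⊗ Z ⟶ A ⊗ Y) :
    (A ⊗ X) ⊗ Z ⟶ A ⊗ Y :=
  (α_ A X Z).hom ≫ (A ◁ f) ≫ (α_ A A Y).inv ≫ (mu ▷ Y)

/-- The measuring condition `(μ_A ⊗ V) ∘ (A ⊗ ψ) ∘ (ψ ⊗ A) = ψ ∘ (V ⊗ μ_A)`. -/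
def Measuring (A V : C) (mu : A ⊗ A ⟶ A) (psi : V ⊗ A ⟶ A ⊗ V) : Prop :=
  (psi ▷ A) ≫ phi A mu psi = (α_ V A A).hom ≫ (V ◁ mu) ≫ psi

/-- The idempotent `∇_{A⊗V} = (μ_A ⊗ V) ∘ (A ⊗ ψ) ∘ (A ⊗ V ⊗ η_A)`. -/
def nabla (A V : C) (eta : 𝟙_ C ⟶ A) (mu : A ⊗ A ⟶ A) (psi : V ⊗ A ⟶ A ⊗ V) :
    A ⊗ V ⟶ A ⊗ V :=
  (ρ_ (A ⊗ V)).inv ≫ ((A ⊗ V) ◁ eta) ≫ phi A mu psi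

/-- The twisted condition
`(μ_A ⊗ V) ∘ (A ⊗ ψ) ∘ (σ ⊗ A) = (μ_A ⊗ V) ∘ (A ⊗ σ) ∘ (ψ ⊗ V) ∘ (V ⊗ ψ)`. -/
def Twisted (A V : C) (mu : A ⊗ A ⟶ A) (psi : V ⊗ A ⟶ A ⊗ V)
    (sig : V ⊗ V ⟶ A ⊗ V) : Prop :=
  (sig ▷ A) ≫ phi A mu psi =
    (α_ V V A).hom ≫ (V ◁ psi) ≫ (α_ V A V).inv ≫ (psi ▷ V) ≫ phi A mu sig

/-- The cocycle condition
`(μ_A ⊗ V) ∘ (A ⊗ σ) ∘ (σ ⊗ V) = (μ_A ⊗ V) ∘ (A ⊗ σ) ∘ (ψ ⊗ V) ∘ (V ⊗ σ)`. -/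
def Cocycle (A V : C) (mu : A ⊗ A ⟶ A) (psi : V ⊗ A ⟶ A ⊗ V)
    (sig : V ⊗ V ⟶ A ⊗ V) : Prop :=
  (sig ▷ V) ≫ phi A mu sig =
    (α_ V V V).hom ≫ (V ◁ sig) ≫ (α_ V A V).inv ≫ (psi ▷ V) ≫ phi A mu sig

/-- The weak crossed product multiplication
`μ_{A⊗V} = (μ_A ⊗ V) ∘ (μ_A ⊗ σ) ∘ (A ⊗ ψ ⊗ V)`. -/
def prodAV (A V : C) (mu : A ⊗ A ⟶ A) (psi : V ⊗ A ⟶ A ⊗ V)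
    (sig : V ⊗ V ⟶ A ⊗ V) : (A ⊗ V) ⊗ (A ⊗ V) ⟶ A ⊗ V :=
  (α_ A V (A ⊗ V)).hom ≫ (A ◁ ((α_ V A V).inv ≫ (psi ▷ V) ≫ (α_ A V V).hom)) ≫
    (α_ A A (V ⊗ V)).inv ≫ (mu ⊗ₘ sig) ≫ (α_ A A V).inv ≫ (mu ▷ V)

/-- The morphism `η_A ⊗ V : V ⟶ A ⊗ V`. -/
def etaT (A V : C) (eta : 𝟙_ C ⟶ A) : V ⟶ A ⊗ V := (λ_ V).inv ≫ (eta ▷ V)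

/-- The morphism `β_ν = (μ_A ⊗ V) ∘ (A ⊗ ν) : A ⟶ A ⊗ V`. -/
def beta (A V : C) (mu : A ⊗ A ⟶ A) (nu : 𝟙_ C ⟶ A ⊗ V) : A ⟶ A ⊗ V :=
  (ρ_ A).inv ≫ (A ◁ nu) ≫ (α_ A A V).inv ≫ (mu ▷ V)

/-- Preunit condition (pre1):
`(μ_A ⊗ V) ∘ (A ⊗ σ) ∘ (ψ ⊗ V) ∘ (V ⊗ ν) = ∇_{A⊗V} ∘ (η_A ⊗ V)`. -/
def Pre1 (A V : C) (eta : 𝟙_ C ⟶ A) (mu : A ⊗ A ⟶ A) (psi : V ⊗ A ⟶ A ⊗ V)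
    (sig : V ⊗ V ⟶ A ⊗ V) (nu : 𝟙_ C ⟶ A ⊗ V) : Prop :=
  (ρ_ V).inv ≫ (V ◁ nu) ≫ (α_ V A V).inv ≫ (psi ▷ V) ≫ phi A mu sig =
    etaT A V eta ≫ nabla A V eta mu psi

/-- Preunit condition (pre2):
`(μ_A ⊗ V) ∘ (A ⊗ σ) ∘ (ν ⊗ V) = ∇_{A⊗V} ∘ (η_A ⊗ V)`. -/
def Pre2 (A V : C) (eta : 𝟙_ C ⟶ A) (mu : A ⊗ A ⟶ A) (psi : V ⊗ A ⟶ A ⊗ V)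
    (sig : V ⊗ V ⟶ A ⊗ V) (nu : 𝟙_ C ⟶ A ⊗ V) : Prop :=
  (λ_ V).inv ≫ (nu ▷ V) ≫ phi A mu sig = etaT A V eta ≫ nabla A V eta mu psi

/-- Preunit condition (pre3): `(μ_A ⊗ V) ∘ (A ⊗ ψ) ∘ (ν ⊗ A) = β_ν`. -/
def Pre3 (A V : C) (mu : A ⊗ A ⟶ A) (psi : V ⊗ A ⟶ A ⊗ V)
    (nu : 𝟙_ C ⟶ A ⊗ V) : Prop :=
  (λ_ A).inv ≫ (nu ▷ A) ≫ phi A mu psi = beta A V mu nu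

/-- `(A ⊗ V, μ_{A⊗V})` is a weak crossed product: measuring, twisted and cocycle
conditions hold and `∇_{A⊗V} ∘ σ = σ`. -/
def WCP (A V : C) (eta : 𝟙_ C ⟶ A) (mu : A ⊗ A ⟶ A) (psi : V ⊗ A ⟶ A ⊗ V)
    (sig : V ⊗ V ⟶ A ⊗ V) : Prop :=
  Measuring A V mu psi ∧ Twisted A V mu psi sig ∧ Cocycle A V mu psi sig ∧
    sig ≫ nabla A V eta mu psi = sig

/-- `(A ⊗ V, μ_{A⊗V})` is a weak crossed product with preunit `ν`. -/
def WCPpre (A V : C) (eta : 𝟙_ C ⟶ A) (mu : A ⊗ A ⟶ A) (psi : V ⊗ A ⟶ A ⊗ V)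
    (sig : V ⊗ V ⟶ A ⊗ V) (nu : 𝟙_ C ⟶ A ⊗ V) : Prop :=
  WCP A V eta mu psi sig ∧ Pre1 A V eta mu psi sig nu ∧
    Pre2 A V eta mu psi sig nu ∧ Pre3 A V mu psi nu

/-- `(μ_A ⊗ Y) ∘ (A ⊗ γ) : A ⊗ X ⟶ A ⊗ Y` for `γ : X ⟶ A ⊗ Y`. -/
def tmap (A : C) {X Y : C} (mu : A ⊗ A ⟶ A) (g : X ⟶ A ⊗ Y) : A ⊗ X ⟶ A ⊗ Y :=
  (A ◁ g) ≫ (α_ A A Y).inv ≫ (mu ▷ Y)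

/-- Left `A`-linearity of `T : A ⊗ X ⟶ A ⊗ Y`:
`T ∘ (μ_A ⊗ X) = (μ_A ⊗ Y) ∘ (A ⊗ T)`. -/
def LeftLin (A : C) {X Y : C} (mu : A ⊗ A ⟶ A) (T : A ⊗ X ⟶ A ⊗ Y) : Prop :=
  (mu ▷ X) ≫ T = (α_ A A X).hom ≫ (A ◁ T) ≫ (α_ A A Y).inv ≫ (mu ▷ Y)

/-- `ν` is a preunit for the associative product `m` on `X`. -/
def IsPreunit {X : C} (m : X ⊗ X ⟶ X) (nu : 𝟙_ C ⟶ X) : Prop :=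
  (ρ_ X).inv ≫ (X ◁ nu) ≫ m = (λ_ X).inv ≫ (nu ▷ X) ≫ m ∧
  (ρ_ X).inv ≫ (X ◁ nu) ≫ m =
    (ρ_ X).inv ≫ (X ◁ ((λ_ (𝟙_ C)).inv ≫ (nu ⊗ₘ nu) ≫ m)) ≫ m

/-- Brzeziński normalization conditions: `ψ ∘ (η_V ⊗ A) = A ⊗ η_V`,
`ψ ∘ (V ⊗ η_A) = η_A ⊗ V`, `σ ∘ (η_V ⊗ V) = σ ∘ (V ⊗ η_V) = η_A ⊗ V`. -/
def BrzNorm (A V : C) (eta : 𝟙_ C ⟶ A) (etaV : 𝟙_ C ⟶ V) (psi : V ⊗ A ⟶ A ⊗ V)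
    (sig : V ⊗ V ⟶ A ⊗ V) : Prop :=
  (λ_ A).inv ≫ (etaV ▷ A) ≫ psi = (ρ_ A).inv ≫ (A ◁ etaV) ∧
  (ρ_ V).inv ≫ (V ◁ eta) ≫ psi = (λ_ V).inv ≫ (eta ▷ V) ∧
  (λ_ V).inv ≫ (etaV ▷ V) ≫ sig = (λ_ V).inv ≫ (eta ▷ V) ∧
  (ρ_ V).inv ≫ (V ◁ etaV) ≫ sig = (λ_ V).inv ≫ (eta ▷ V)

section Kleisli

variable {A : C} {mu : A ⊗ A ⟶ A}

lemma tmap_comp {X' X Y : C} (u : X' ⟶ X) (h : X ⟶ A ⊗ Y) :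
    tmap A mu (u ≫ h) = (A ◁ u) ≫ tmap A mu h := by
  simp [tmap]

lemma phi_eq_tmap {X Z Y : C} (f : X ⊗ Z ⟶ A ⊗ Y) :
    phi A mu f = (α_ A X Z).hom ≫ tmap A mu f := by
  simp [phi, tmap]

lemma leftLin_tmap (hassoc : (mu ▷ A) ≫ mu = (α_ A A A).hom ≫ (A ◁ mu) ≫ mu)
    {X Z : C} (k : X ⟶ A ⊗ Z) : LeftLin A mu (tmap A mu k) := by
  simp only [LeftLin, tmap]
  rw [← whisker_exchange_assoc, associator_inv_naturality_left_assoc,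
    ← comp_whiskerRight, hassoc]
  simp only [MonoidalCategory.whiskerLeft_comp, comp_whiskerRight, Category.assoc]
  rw [associator_inv_naturality_middle_assoc]
  monoidal

lemma tmap_tmap (hassoc : (mu ▷ A) ≫ mu = (α_ A A A).hom ≫ (A ◁ mu) ≫ mu)
    {X Y Z : C} (h : X ⟶ A ⊗ Y) (k : Y ⟶ A ⊗ Z) :
    tmap A mu (h ≫ tmap A mu k) = tmap A mu h ≫ tmap A mu k := by
  have hk : (mu ▷ Y) ≫ tmap A mu k = _ := leftLin_tmap hassoc k
  conv_rhs => rw [tmap, Category.assoc, Category.assoc, hk, Iso.inv_hom_id_assoc]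
  simp only [tmap, MonoidalCategory.whiskerLeft_comp, Category.assoc]

lemma tmap_whiskerRight_tmap (hassoc : (mu ▷ A) ≫ mu = (α_ A A A).hom ≫ (A ◁ mu) ≫ mu)
    {X Y W Z : C} (f : X ⟶ A ⊗ Y) (k : Y ⊗ W ⟶ A ⊗ Z) :
    (tmap A mu f ▷ W) ≫ (α_ A Y W).hom ≫ tmap A mu k =
      (α_ A X W).hom ≫ tmap A mu ((f ▷ W) ≫ (α_ A Y W).hom ≫ tmap A mu k) := by
  have hk : (mu ▷ (Y ⊗ W)) ≫ tmap A mu k = _ := leftLin_tmap hassoc k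
  conv_lhs => rw [tmap]
  simp only [comp_whiskerRight, Category.assoc]
  rw [whiskerRight_tensor_symm_assoc mu Y W, Iso.inv_hom_id_assoc, hk]
  simp only [tmap, MonoidalCategory.whiskerLeft_comp, Category.assoc]
  monoidal

lemma eta_tmap {eta : 𝟙_ C ⟶ A} (hunit : (eta ▷ A) ≫ mu = (λ_ A).hom)
    {X Y : C} (h : X ⟶ A ⊗ Y) :
    (λ_ X).inv ≫ (eta ▷ X) ≫ tmap A mu h = h := by
  simp only [tmap]
  rw [← whisker_exchange_assoc, associator_inv_naturality_left_assoc,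
    ← comp_whiskerRight, hunit]
  monoidal

end Kleisli

def psiV {A V : C} (psi : V ⊗ A ⟶ A ⊗ V) : V ⊗ (A ⊗ V) ⟶ A ⊗ (V ⊗ V) :=
  (α_ V A V).inv ≫ (psi ▷ V) ≫ (α_ A V V).hom

def vmul {A V : C} (mu : A ⊗ A ⟶ A) (psi : V ⊗ A ⟶ A ⊗ V) (sig : V ⊗ V ⟶ A ⊗ V) :
    V ⊗ (A ⊗ V) ⟶ A ⊗ V :=
  psiV psi ≫ tmap A mu sig

def psiEta {A V : C} (eta : 𝟙_ C ⟶ A) (psi : V ⊗ A ⟶ A ⊗ V) : V ⟶ A ⊗ V :=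
  (ρ_ V).inv ≫ (V ◁ eta) ≫ psi

section CrossedProduct

variable {A V : C} {eta : 𝟙_ C ⟶ A} {mu : A ⊗ A ⟶ A} {psi : V ⊗ A ⟶ A ⊗ V}
  {sig : V ⊗ V ⟶ A ⊗ V}

lemma nabla_eq_tmap : nabla A V eta mu psi = tmap A mu (psiEta eta psi) := by
  simp only [nabla, phi, tmap, psiEta, MonoidalCategory.whiskerLeft_comp, Category.assoc]
  monoidal

lemma prodAV_eq_tmap (hassoc : (mu ▷ A) ≫ mu = (α_ A A A).hom ≫ (A ◁ mu) ≫ mu) :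
    prodAV A V mu psi sig = (α_ A V (A ⊗ V)).hom ≫ tmap A mu (vmul mu psi sig) := by
  have hsig : (mu ▷ (V ⊗ V)) ≫ tmap A mu sig = _ := leftLin_tmap hassoc sig
  rw [prodAV, MonoidalCategory.tensorHom_def]
  simp only [Category.assoc]
  rw [show (A ◁ sig) ≫ (α_ A A V).inv ≫ (mu ▷ V) = tmap A mu sig from rfl, hsig]
  simp only [vmul, psiV, tmap, MonoidalCategory.whiskerLeft_comp, Category.assoc,
    Iso.inv_hom_id_assoc]

lemma Measuring.whiskerLeft_mu_comp (hpsi : Measuring A V mu psi) :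
    (V ◁ mu) ≫ psi = (α_ V A A).inv ≫ (psi ▷ A) ≫ (α_ A V A).hom ≫ tmap A mu psi := by
  rw [← phi_eq_tmap, hpsi, Iso.inv_hom_id_assoc]

lemma Twisted.whiskerRight_comp_tmap (htw : Twisted A V mu psi sig) :
    (sig ▷ A) ≫ (α_ A V A).hom ≫ tmap A mu psi =
      (α_ V V A).hom ≫ (V ◁ psi) ≫ vmul mu psi sig := by
  rw [← phi_eq_tmap, htw, phi_eq_tmap]
  simp [vmul, psiV]

lemma Cocycle.whiskerRight_comp_tmap (hco : Cocycle A V mu psi sig) :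
    (sig ▷ V) ≫ (α_ A V V).hom ≫ tmap A mu sig =
      (α_ V V V).hom ≫ (V ◁ sig) ≫ vmul mu psi sig := by
  rw [← phi_eq_tmap, hco, phi_eq_tmap]
  simp [vmul, psiV]

lemma whiskerLeft_mu_vmul (hassoc : (mu ▷ A) ≫ mu = (α_ A A A).hom ≫ (A ◁ mu) ≫ mu)
    (hpsi : Measuring A V mu psi) :
    (V ◁ ((α_ A A V).inv ≫ (mu ▷ V))) ≫ vmul mu psi sig =
      (α_ V A (A ⊗ V)).inv ≫ (psi ▷ (A ⊗ V)) ≫ (α_ A V (A ⊗ V)).hom ≫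
        tmap A mu (vmul mu psi sig) := by
  conv_lhs => rw [vmul, psiV]
  simp only [MonoidalCategory.whiskerLeft_comp, Category.assoc]
  rw [associator_inv_naturality_middle_assoc, ← comp_whiskerRight_assoc,
    hpsi.whiskerLeft_mu_comp]
  simp only [comp_whiskerRight, Category.assoc]
  rw [tmap_whiskerRight_tmap hassoc psi sig, tmap_comp, tmap_comp]
  simp only [vmul, psiV, tmap, MonoidalCategory.whiskerLeft_comp, Category.assoc]
  monoidal

lemma whiskerLeft_tmap_vmul (hassoc : (mu ▷ A) ≫ mu = (α_ A A A).hom ≫ (A ◁ mu) ≫ mu)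
    (hpsi : Measuring A V mu psi) {X : C} (h : X ⟶ A ⊗ V) :
    (V ◁ tmap A mu h) ≫ vmul mu psi sig =
      (α_ V A X).inv ≫ ((V ⊗ A) ◁ h) ≫ (psi ▷ (A ⊗ V)) ≫ (α_ A V (A ⊗ V)).hom ≫
        tmap A mu (vmul mu psi sig) := by
  rw [tmap, MonoidalCategory.whiskerLeft_comp_assoc, whiskerLeft_mu_vmul hassoc hpsi,
    associator_inv_naturality_right_assoc]

end CrossedProduct

section Associativity

variable {A V : C} {mu : A ⊗ A ⟶ A} {psi : V ⊗ A ⟶ A ⊗ V} {sig : V ⊗ V ⟶ A ⊗ V}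

lemma tmap_vmul (hassoc : (mu ▷ A) ≫ mu = (α_ A A A).hom ≫ (A ◁ mu) ≫ mu) :
    tmap A mu (vmul mu psi sig) = tmap A mu (psiV psi) ≫ tmap A mu sig :=
  tmap_tmap hassoc _ _

lemma sig_whiskerRight_tmap_vmul
    (hassoc : (mu ▷ A) ≫ mu = (α_ A A A).hom ≫ (A ◁ mu) ≫ mu)
    (htw : Twisted A V mu psi sig) (hco : Cocycle A V mu psi sig) :
    (sig ▷ (A ⊗ V)) ≫ (α_ A V (A ⊗ V)).hom ≫ tmap A mu (vmul mu psi sig) =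
      (α_ V V (A ⊗ V)).hom ≫ (V ◁ psiV psi) ≫ (α_ V A (V ⊗ V)).inv ≫
        (psi ▷ (V ⊗ V)) ≫ (α_ A V (V ⊗ V)).hom ≫ (A ◁ (V ◁ sig)) ≫
          tmap A mu (vmul mu psi sig) := by
  have hpsiV : (sig ▷ (A ⊗ V)) ≫ (α_ A V (A ⊗ V)).hom ≫ tmap A mu (psiV psi) =
      (α_ (V ⊗ V) A V).inv ≫
        (((sig ▷ A) ≫ (α_ A V A).hom ≫ tmap A mu psi) ▷ V) ≫ (α_ A V V).hom := by
    simp only [tmap, psiV, MonoidalCategory.whiskerLeft_comp, comp_whiskerRight,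
      Category.assoc]
    monoidal
  calc (sig ▷ (A ⊗ V)) ≫ (α_ A V (A ⊗ V)).hom ≫ tmap A mu (vmul mu psi sig)
      = (α_ (V ⊗ V) A V).inv ≫ (((α_ V V A).hom ≫ (V ◁ psi)) ▷ V) ≫ (psiV psi ▷ V) ≫
          (tmap A mu sig ▷ V) ≫ (α_ A V V).hom ≫ tmap A mu sig := by
        rw [tmap_vmul hassoc, reassoc_of% hpsiV, htw.whiskerRight_comp_tmap]
        simp only [vmul, comp_whiskerRight, Category.assoc]
    _ = (α_ (V ⊗ V) A V).inv ≫ (((α_ V V A).hom ≫ (V ◁ psi)) ▷ V) ≫ (psiV psi ▷ V) ≫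
          (α_ A (V ⊗ V) V).hom ≫ (A ◁ ((α_ V V V).hom ≫ (V ◁ sig))) ≫
            tmap A mu (vmul mu psi sig) := by
        rw [tmap_whiskerRight_tmap hassoc sig sig, hco.whiskerRight_comp_tmap]
        simp only [tmap_comp, MonoidalCategory.whiskerLeft_comp, Category.assoc]
    _ = _ := by
        simp only [psiV, comp_whiskerRight, MonoidalCategory.whiskerLeft_comp,
          Category.assoc]
        monoidal

lemma whiskerLeft_tmap_vmul_vmul
    (hassoc : (mu ▷ A) ≫ mu = (α_ A A A).hom ≫ (A ◁ mu) ≫ mu)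
    (hpsi : Measuring A V mu psi) :
    (V ◁ tmap A mu (vmul mu psi sig)) ≫ vmul mu psi sig =
      (α_ V A (V ⊗ (A ⊗ V))).inv ≫ ((V ⊗ A) ◁ psiV psi) ≫ (psi ▷ (A ⊗ (V ⊗ V))) ≫
        (α_ A V (A ⊗ (V ⊗ V))).hom ≫
        tmap A mu ((α_ V A (V ⊗ V)).inv ≫ ((V ⊗ A) ◁ sig) ≫ (psi ▷ (A ⊗ V)) ≫
          (α_ A V (A ⊗ V)).hom) ≫ tmap A mu (vmul mu psi sig) := by
  rw [whiskerLeft_tmap_vmul hassoc hpsi, vmul, MonoidalCategory.whiskerLeft_comp,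
    Category.assoc, whisker_exchange_assoc, associator_naturality_right_assoc,
    ← tmap_comp, ← vmul, whiskerLeft_tmap_vmul hassoc hpsi sig,
    ← tmap_tmap hassoc]
  simp only [Category.assoc]

lemma vmul_whiskerRight_tmap_vmul
    (hassoc : (mu ▷ A) ≫ mu = (α_ A A A).hom ≫ (A ◁ mu) ≫ mu)
    (htw : Twisted A V mu psi sig) (hco : Cocycle A V mu psi sig) :
    (vmul mu psi sig ▷ (A ⊗ V)) ≫ (α_ A V (A ⊗ V)).hom ≫ tmap A mu (vmul mu psi sig) =
      (psiV psi ▷ (A ⊗ V)) ≫ (α_ A (V ⊗ V) (A ⊗ V)).hom ≫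
        tmap A mu ((α_ V V (A ⊗ V)).hom ≫ (V ◁ psiV psi) ≫
          (α_ V A (V ⊗ V)).inv ≫ (psi ▷ (V ⊗ V)) ≫ (α_ A V (V ⊗ V)).hom ≫
          (A ◁ (V ◁ sig))) ≫ tmap A mu (vmul mu psi sig) := by
  rw [vmul, comp_whiskerRight, Category.assoc, ← vmul,
    tmap_whiskerRight_tmap hassoc sig, sig_whiskerRight_tmap_vmul hassoc htw hco,
    ← tmap_tmap hassoc]
  simp only [Category.assoc]

lemma vmul_assoc (hassoc : (mu ▷ A) ≫ mu = (α_ A A A).hom ≫ (A ◁ mu) ≫ mu)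
    (hpsi : Measuring A V mu psi) (htw : Twisted A V mu psi sig)
    (hco : Cocycle A V mu psi sig) :
    (V ◁ tmap A mu (vmul mu psi sig)) ≫ vmul mu psi sig =
      (V ◁ (α_ A V (A ⊗ V)).inv) ≫ (α_ V (A ⊗ V) (A ⊗ V)).inv ≫
        (vmul mu psi sig ▷ (A ⊗ V)) ≫ (α_ A V (A ⊗ V)).hom ≫
        tmap A mu (vmul mu psi sig) := by
  rw [whiskerLeft_tmap_vmul_vmul hassoc hpsi, vmul_whiskerRight_tmap_vmul hassoc htw hco]
  simp only [whisker_exchange_assoc]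
  simp only [tmap, psiV, MonoidalCategory.whiskerLeft_comp, comp_whiskerRight,
    Category.assoc]
  monoidal

lemma prodAV_assoc (hassoc : (mu ▷ A) ≫ mu = (α_ A A A).hom ≫ (A ◁ mu) ≫ mu)
    (hpsi : Measuring A V mu psi) (htw : Twisted A V mu psi sig)
    (hco : Cocycle A V mu psi sig) :
    (prodAV A V mu psi sig ▷ (A ⊗ V)) ≫ prodAV A V mu psi sig =
      (α_ (A ⊗ V) (A ⊗ V) (A ⊗ V)).hom ≫
        ((A ⊗ V) ◁ prodAV A V mu psi sig) ≫ prodAV A V mu psi sig := by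
  rw [prodAV_eq_tmap hassoc, comp_whiskerRight, MonoidalCategory.whiskerLeft_comp,
    Category.assoc, Category.assoc,
    tmap_whiskerRight_tmap hassoc (vmul mu psi sig) (vmul mu psi sig),
    associator_naturality_right_assoc, ← tmap_comp, vmul_assoc hassoc hpsi htw hco]
  conv_rhs => rw [tmap_comp, tmap_comp]
  monoidal

end Associativity

section Preunit

variable {A V : C} {eta : 𝟙_ C ⟶ A} {mu : A ⊗ A ⟶ A} {psi : V ⊗ A ⟶ A ⊗ V}
  {sig : V ⊗ V ⟶ A ⊗ V} {nu : 𝟙_ C ⟶ A ⊗ V}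

lemma etaT_nabla (hunit : (eta ▷ A) ≫ mu = (λ_ A).hom) :
    etaT A V eta ≫ nabla A V eta mu psi = psiEta eta psi := by
  rw [nabla_eq_tmap, etaT, Category.assoc, eta_tmap hunit]

lemma Pre1.whiskerLeft_nu_vmul (hunit : (eta ▷ A) ≫ mu = (λ_ A).hom)
    (h1 : Pre1 A V eta mu psi sig nu) :
    (ρ_ V).inv ≫ (V ◁ nu) ≫ vmul mu psi sig = psiEta eta psi := by
  rw [← etaT_nabla hunit, ← h1, phi_eq_tmap]
  simp [vmul, psiV]

lemma Pre2.nu_whiskerRight_tmap (hunit : (eta ▷ A) ≫ mu = (λ_ A).hom)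
    (h2 : Pre2 A V eta mu psi sig nu) :
    (λ_ V).inv ≫ (nu ▷ V) ≫ (α_ A V V).hom ≫ tmap A mu sig = psiEta eta psi := by
  rw [← etaT_nabla hunit, ← h2, phi_eq_tmap]

lemma Pre3.nu_whiskerRight_tmap (h3 : Pre3 A V mu psi nu) :
    (λ_ A).inv ≫ (nu ▷ A) ≫ (α_ A V A).hom ≫ tmap A mu psi =
      (ρ_ A).inv ≫ tmap A mu nu := by
  rw [← phi_eq_tmap, h3]
  simp [beta, tmap]

lemma prodAV_nu_right_eq_nabla
    (hassoc : (mu ▷ A) ≫ mu = (α_ A A A).hom ≫ (A ◁ mu) ≫ mu)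
    (hunit : (eta ▷ A) ≫ mu = (λ_ A).hom) (h1 : Pre1 A V eta mu psi sig nu) :
    (ρ_ (A ⊗ V)).inv ≫ ((A ⊗ V) ◁ nu) ≫ prodAV A V mu psi sig =
      nabla A V eta mu psi := by
  have e : (ρ_ (A ⊗ V)).inv ≫ (α_ A V (𝟙_ C)).hom = A ◁ (ρ_ V).inv := by monoidal
  rw [prodAV_eq_tmap hassoc, associator_naturality_right_assoc, ← tmap_comp,
    reassoc_of% e, ← tmap_comp, h1.whiskerLeft_nu_vmul hunit, nabla_eq_tmap]

lemma prodAV_nu_left_eq_nabla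
    (hassoc : (mu ▷ A) ≫ mu = (α_ A A A).hom ≫ (A ◁ mu) ≫ mu)
    (hunit : (eta ▷ A) ≫ mu = (λ_ A).hom) (h2 : Pre2 A V eta mu psi sig nu)
    (h3 : Pre3 A V mu psi nu) :
    (λ_ (A ⊗ V)).inv ≫ (nu ▷ (A ⊗ V)) ≫ prodAV A V mu psi sig =
      nabla A V eta mu psi := by
  have hpsiV : (λ_ (A ⊗ V)).inv ≫ (nu ▷ (A ⊗ V)) ≫ (α_ A V (A ⊗ V)).hom ≫
        tmap A mu (psiV psi) =
      (((λ_ A).inv ≫ (nu ▷ A) ≫ (α_ A V A).hom ≫ tmap A mu psi) ▷ V) ≫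
        (α_ A V V).hom := by
    simp only [tmap, psiV, MonoidalCategory.whiskerLeft_comp, comp_whiskerRight,
      Category.assoc]
    monoidal
  have e : ((ρ_ A).inv ▷ V) ≫ (α_ A (𝟙_ C) V).hom = A ◁ (λ_ V).inv := by monoidal
  rw [prodAV_eq_tmap hassoc, tmap_vmul hassoc, reassoc_of% hpsiV,
    h3.nu_whiskerRight_tmap, comp_whiskerRight, Category.assoc,
    tmap_whiskerRight_tmap hassoc nu sig, reassoc_of% e, ← tmap_comp,
    h2.nu_whiskerRight_tmap hunit, nabla_eq_tmap]

lemma vmul_nabla (hassoc : (mu ▷ A) ≫ mu = (α_ A A A).hom ≫ (A ◁ mu) ≫ mu)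
    (hsig : sig ≫ nabla A V eta mu psi = sig) :
    vmul mu psi sig ≫ nabla A V eta mu psi = vmul mu psi sig := by
  rw [vmul, Category.assoc, nabla_eq_tmap, ← tmap_tmap hassoc, ← nabla_eq_tmap, hsig]

lemma prodAV_nabla (hassoc : (mu ▷ A) ≫ mu = (α_ A A A).hom ≫ (A ◁ mu) ≫ mu)
    (hsig : sig ≫ nabla A V eta mu psi = sig) :
    prodAV A V mu psi sig ≫ nabla A V eta mu psi = prodAV A V mu psi sig := by
  rw [prodAV_eq_tmap hassoc, Category.assoc, nabla_eq_tmap, ← tmap_tmap hassoc,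
    ← nabla_eq_tmap, vmul_nabla hassoc hsig]

lemma psiEta_whiskerRight_tmap_vmul
    (hassoc : (mu ▷ A) ≫ mu = (α_ A A A).hom ≫ (A ◁ mu) ≫ mu)
    (hunit : (eta ▷ A) ≫ mu = (λ_ A).hom) (hpsi : Measuring A V mu psi) :
    (psiEta eta psi ▷ (A ⊗ V)) ≫ (α_ A V (A ⊗ V)).hom ≫ tmap A mu (vmul mu psi sig) =
      vmul mu psi sig := by
  have hmu : (psi ▷ (A ⊗ V)) ≫ (α_ A V (A ⊗ V)).hom ≫ tmap A mu (vmul mu psi sig) =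
      (α_ V A (A ⊗ V)).hom ≫ (V ◁ ((α_ A A V).inv ≫ (mu ▷ V))) ≫ vmul mu psi sig := by
    rw [whiskerLeft_mu_vmul hassoc hpsi, Iso.hom_inv_id_assoc]
  have heta : (eta ▷ (A ⊗ V)) ≫ (α_ A A V).inv ≫ (mu ▷ V) =
      (α_ (𝟙_ C) A V).inv ≫ (λ_ A).hom ▷ V := by
    rw [associator_inv_naturality_left_assoc, ← comp_whiskerRight, hunit]
  rw [psiEta, comp_whiskerRight, comp_whiskerRight, Category.assoc, Category.assoc, hmu,
    associator_naturality_middle_assoc, ← MonoidalCategory.whiskerLeft_comp_assoc, heta]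
  monoidal

lemma whiskerLeft_psiEta_vmul (htw : Twisted A V mu psi sig)
    (hsig : sig ≫ nabla A V eta mu psi = sig) :
    (V ◁ psiEta eta psi) ≫ vmul mu psi sig = sig := by
  calc (V ◁ psiEta eta psi) ≫ vmul mu psi sig
      = (ρ_ (V ⊗ V)).inv ≫ ((V ⊗ V) ◁ eta) ≫ (α_ V V A).hom ≫ (V ◁ psi) ≫
          vmul mu psi sig := by
        simp only [psiEta, MonoidalCategory.whiskerLeft_comp, Category.assoc]
        monoidal
    _ = (ρ_ (V ⊗ V)).inv ≫ ((V ⊗ V) ◁ eta) ≫ (sig ▷ A) ≫ (α_ A V A).hom ≫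
          tmap A mu psi := by rw [htw.whiskerRight_comp_tmap]
    _ = sig ≫ nabla A V eta mu psi := by
        rw [whisker_exchange_assoc sig eta, nabla, phi_eq_tmap]
        monoidal
    _ = sig := hsig

lemma whiskerLeft_nabla_vmul (hassoc : (mu ▷ A) ≫ mu = (α_ A A A).hom ≫ (A ◁ mu) ≫ mu)
    (hpsi : Measuring A V mu psi) (htw : Twisted A V mu psi sig)
    (hsig : sig ≫ nabla A V eta mu psi = sig) :
    (V ◁ nabla A V eta mu psi) ≫ vmul mu psi sig = vmul mu psi sig := by
  rw [nabla_eq_tmap, whiskerLeft_tmap_vmul hassoc hpsi,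
    whisker_exchange_assoc psi (psiEta eta psi), associator_naturality_right_assoc,
    ← tmap_comp, whiskerLeft_psiEta_vmul htw hsig]
  simp [vmul, psiV]

lemma whiskerLeft_nabla_prodAV (hassoc : (mu ▷ A) ≫ mu = (α_ A A A).hom ≫ (A ◁ mu) ≫ mu)
    (hpsi : Measuring A V mu psi) (htw : Twisted A V mu psi sig)
    (hsig : sig ≫ nabla A V eta mu psi = sig) :
    ((A ⊗ V) ◁ nabla A V eta mu psi) ≫ prodAV A V mu psi sig = prodAV A V mu psi sig := by
  rw [prodAV_eq_tmap hassoc, associator_naturality_right_assoc, ← tmap_comp,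
    whiskerLeft_nabla_vmul hassoc hpsi htw hsig]

lemma nabla_whiskerRight_prodAV (hassoc : (mu ▷ A) ≫ mu = (α_ A A A).hom ≫ (A ◁ mu) ≫ mu)
    (hunit : (eta ▷ A) ≫ mu = (λ_ A).hom) (hpsi : Measuring A V mu psi) :
    (nabla A V eta mu psi ▷ (A ⊗ V)) ≫ prodAV A V mu psi sig = prodAV A V mu psi sig := by
  rw [prodAV_eq_tmap hassoc, nabla_eq_tmap, tmap_whiskerRight_tmap hassoc,
    psiEta_whiskerRight_tmap_vmul hassoc hunit hpsi]

end Preunit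

lemma leftUnitor_inv_tensorHom_self_comp {X : C} (m : X ⊗ X ⟶ X) (nu : 𝟙_ C ⟶ X) :
    (λ_ (𝟙_ C)).inv ≫ (nu ⊗ₘ nu) ≫ m = nu ≫ (λ_ X).inv ≫ (nu ▷ X) ≫ m := by
  rw [MonoidalCategory.tensorHom_def', Category.assoc, ← leftUnitor_inv_naturality_assoc]

/-- characterization, direction (ii) ⟹ (i): the weak crossed product
with the compatibility conditions gives an associative product with preunit `ν`,
normalized with respect to `∇_{A⊗V}^ν`, and `∇_{A⊗V} = ∇_{A⊗V}^ν`. -/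
theorem wcp_gives_preunit (A V : C) (eta : 𝟙_ C ⟶ A) (mu : A ⊗ A ⟶ A)
    (hA : IsMon A eta mu) (psi : V ⊗ A ⟶ A ⊗ V) (sig : V ⊗ V ⟶ A ⊗ V)
    (nu : 𝟙_ C ⟶ A ⊗ V)
    (hpsi : Measuring A V mu psi) (htw : Twisted A V mu psi sig)
    (hco : Cocycle A V mu psi sig) (hsig : sig ≫ nabla A V eta mu psi = sig)
    (h1 : Pre1 A V eta mu psi sig nu) (h2 : Pre2 A V eta mu psi sig nu)
    (h3 : Pre3 A V mu psi nu) :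
    ((prodAV A V mu psi sig ▷ (A ⊗ V)) ≫ prodAV A V mu psi sig =
        (α_ (A ⊗ V) (A ⊗ V) (A ⊗ V)).hom ≫ ((A ⊗ V) ◁ prodAV A V mu psi sig) ≫
          prodAV A V mu psi sig) ∧
    IsPreunit (prodAV A V mu psi sig) nu ∧
    (prodAV A V mu psi sig ≫
        ((ρ_ (A ⊗ V)).inv ≫ ((A ⊗ V) ◁ nu) ≫ prodAV A V mu psi sig) =
      prodAV A V mu psi sig) ∧
    ((((ρ_ (A ⊗ V)).inv ≫ ((A ⊗ V) ◁ nu) ≫ prodAV A V mu psi sig) ⊗ₘ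
        ((ρ_ (A ⊗ V)).inv ≫ ((A ⊗ V) ◁ nu) ≫ prodAV A V mu psi sig)) ≫
          prodAV A V mu psi sig =
      prodAV A V mu psi sig) ∧
    nabla A V eta mu psi =
      (ρ_ (A ⊗ V)).inv ≫ ((A ⊗ V) ◁ nu) ≫ prodAV A V mu psi sig := by
  obtain ⟨hunit, -, hassoc⟩ := hA
  have hright := prodAV_nu_right_eq_nabla hassoc hunit h1
  have hleft := prodAV_nu_left_eq_nabla hassoc hunit h2 h3
  refine ⟨prodAV_assoc hassoc hpsi htw hco, ⟨hright.trans hleft.symm, ?_⟩, ?_, ?_,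
    hright.symm⟩
  · rw [leftUnitor_inv_tensorHom_self_comp, hleft,
      MonoidalCategory.whiskerLeft_comp_assoc, whiskerLeft_nabla_prodAV hassoc hpsi htw hsig]
  · rw [hright, prodAV_nabla hassoc hsig]
  · rw [hright, MonoidalCategory.tensorHom_def, Category.assoc,
      whiskerLeft_nabla_prodAV hassoc hpsi htw hsig, nabla_whiskerRight_prodAV hassoc hunit hpsi]

end WeakCrossed
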